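/- arXiv:0807.2694 — 4 statements merged into one kernel-verified Lean document; each statement's English description precedes it below -/
import Mathlib

section
/- Let φ = (1+√5)/2. For all reals w_e, w_h with 0 ≤ w_e ≤ w_h/φ and w_h > 0, ((1/φ²)·w_h + (1/φ)·(2·w_h + w_e)) / ((1/φ²)·w_e + (1/φ)·w_h) ≤ φ². -/
theorem rme_unmapped_case_ratio (w_e w_h : ℝ) (φ : ℝ) (hφ : φ = (1 + Real.sqrt 5) / 2)
    (h0 : 0 ≤ w_e) (h1 : w_e ≤ w_h / φ) (h2 : 0 < w_h) :
    ((1 / φ ^ 2) * w_h + (1 / φ) * (2 * w_h + w_e)) /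
      ((1 / φ ^ 2) * w_e + (1 / φ) * w_h) ≤ φ ^ 2 := by
  have hs : Real.sqrt 5 ^ 2 = 5 := Real.sq_sqrt (by norm_num)
  have hs1 : (1:ℝ) < Real.sqrt 5 := by nlinarith [Real.sqrt_nonneg 5]
  have hφpos : 0 < φ := by rw [hφ]; linarith
  have hφ2 : φ ^ 2 = φ + 1 := by rw [hφ]; nlinarith
  have hφlt2 : φ < 2 := by nlinarith
  have hD : 0 < (1 / φ ^ 2) * w_e + (1 / φ) * w_h := by
    have : 0 < (1 / φ) * w_h := by positivity
    have : 0 ≤ (1 / φ ^ 2) * w_e := by positivity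
    linarith
  rw [div_le_iff₀ hD]
  have h1' : 1 / φ = φ - 1 := by
    field_simp; nlinarith
  have h2' : 1 / φ ^ 2 = 2 - φ := by
    field_simp; nlinarith
  rw [h1', h2', hφ2]
  nlinarith [mul_nonneg (le_of_lt (sub_pos.mpr hφlt2)) h0]
end

section
/- Fix integers b ≥ 1 and n ≥ 1 and let ε = 1/n. Then (1·b + (1−ε)·b·n + ε·b) / ((ε·(b−1) + 1)·n + 1·b) ≥ b / (1 + (2b−1)/n). In particular, as n → ∞ the right-hand side tends to b, so the left-hand side is unbounded in b. -/
open Filter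

theorem edf_non_competitive_ratio :
    (∀ b n : ℕ, 1 ≤ b → 1 ≤ n →
      (b:ℝ) / (1 + (2 * (b:ℝ) - 1) / n) ≤
        (1 * (b:ℝ) + (1 - 1 / (n:ℝ)) * b * n + (1 / (n:ℝ)) * b) /
          (((1 / (n:ℝ)) * ((b:ℝ) - 1) + 1) * n + 1 * b)) ∧
    ∀ b : ℕ, 1 ≤ b →
      Tendsto (fun n : ℕ => (b:ℝ) / (1 + (2 * (b:ℝ) - 1) / n)) atTop (nhds b) := by
  constructor
  · intro b n hb hn
    have hb1 : (1:ℝ) ≤ b := by exact_mod_cast hb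
    have hn1 : (1:ℝ) ≤ n := by exact_mod_cast hn
    have hn0 : (0:ℝ) < n := by linarith
    have hd1 : (0:ℝ) < 1 + (2 * (b:ℝ) - 1) / n := by
      have : (0:ℝ) ≤ (2 * (b:ℝ) - 1) / n := by
        apply div_nonneg <;> linarith
      linarith
    have hd2 : (0:ℝ) < ((1 / (n:ℝ)) * ((b:ℝ) - 1) + 1) * n + 1 * b := by
      have : (0:ℝ) ≤ (1 / (n:ℝ)) * ((b:ℝ) - 1) := by
        apply mul_nonneg
        · positivity
        · linarith
      nlinarith
    rw [div_le_div_iff₀ hd1 hd2]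
    have hne : (n:ℝ) ≠ 0 := ne_of_gt hn0
    field_simp
    nlinarith [sq_nonneg ((n:ℝ) - 1), mul_nonneg (mul_nonneg (by linarith : (0:ℝ) ≤ b) hn0.le) hn0.le]
  · intro b hb
    have h1 : Tendsto (fun n : ℕ => (2 * (b:ℝ) - 1) / n) atTop (nhds 0) := by
      have := tendsto_one_div_atTop_nhds_zero_nat (𝕜 := ℝ)
      have h := this.const_mul (2 * (b:ℝ) - 1)
      simpa [div_eq_mul_inv, mul_comm] using h
    have h2 : Tendsto (fun n : ℕ => 1 + (2 * (b:ℝ) - 1) / n) atTop (nhds 1) := by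
      simpa using (tendsto_const_nhds.add h1)
    have h3 := (tendsto_const_nhds (x := (b:ℝ)) (f := atTop)).div h2 (by norm_num)
    simpa [Pi.div_def] using h3
end

section
/- Let S be a finite set of packets, each packet p having an integer release time r_p and integer deadline d_p with r_p ≤ d_p, and suppose there exists a schedule assigning each packet of S to a distinct integer time step σ(p) with r_p ≤ σ(p) ≤ d_p. Then the Earliest-Deadline-First assignment — at each time step, among pending unscheduled packets (those released by that step and not yet expired), schedule one with the smallest deadline — also schedules every packet of S by its deadline. -/
/-!
Suppose the EDF run sends `p` at time `t = τ p`. Take the least `u` such that every slot of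
`[u, t]` is used by a packet whose deadline is at most `d p`; such `u` exist (e.g. `r p`) and are
bounded below since the slots are used by distinct packets. Minimality forces every packet sent
in `[u, t]` to be released no earlier than `u`: a packet `q` released before `u` was pending at
`u - 1`, so EDF sent a packet of deadline `≤ d q` there, and `u - 1` would qualify too. Hence the
`t - u + 1` packets sent in `[u, t]` all have their windows inside `[u, d p]`, and the feasible
schedule fits them injectively there, so `t ≤ d p`.
-/

open Finset

section Pigeonhole

variable {P : Type*} {A : Finset P} {τ σ : P → ℤ} {u t e : ℤ}

theorem sub_card_le_of_surjOn_Icc (h : Set.SurjOn τ A (Set.Icc u t)) : t + 1 - #A ≤ u := by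
  have hcard := card_le_card_of_surjOn τ (s := A) (t := Icc u t) (by rwa [coe_Icc])
  rw [Int.card_Icc] at hcard
  omega

theorem le_of_surjOn_Icc_of_mapsTo_Icc (hut : u ≤ t) (hτ : Set.SurjOn τ A (Set.Icc u t))
    (hσ : Set.MapsTo σ A (Set.Icc u e)) (hσinj : Set.InjOn σ A) : t ≤ e := by
  have hAt := card_le_card_of_surjOn τ (s := A) (t := Icc u t) (by rwa [coe_Icc])
  have hAe := card_le_card_of_injOn σ (t := Icc u e) (by rwa [coe_Icc]) hσinj
  rw [Int.card_Icc] at hAt hAe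
  omega

end Pigeonhole

section EDF

variable {P : Type*} (S : Finset P) (r d τ : P → ℤ)

def IsWorkConserving : Prop :=
  ∀ p ∈ S, ∀ s : ℤ, r p ≤ s → s < τ p → ∃ q ∈ S, τ q = s

def IsEarliestDeadlineFirst : Prop :=
  ∀ p ∈ S, ∀ q ∈ S, τ p < τ q → r q ≤ τ p → d p ≤ d q

variable {S r d τ}

theorem IsEarliestDeadlineFirst.surjOn_Icc_release (hbusy : IsWorkConserving S r τ)
    (hedf : IsEarliestDeadlineFirst S r d τ) {p : P} (hp : p ∈ S) :
    Set.SurjOn τ (S.filter (d · ≤ d p)) (Set.Icc (r p) (τ p)) := by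
  rintro s ⟨hrs, hst⟩
  rcases hst.lt_or_eq with hst | rfl
  · obtain ⟨q, hq, rfl⟩ := hbusy p hp s hrs hst
    exact ⟨q, mem_filter.2 ⟨hq, hedf q hq p hp hst hrs⟩, rfl⟩
  · exact ⟨p, mem_filter.2 ⟨hp, le_rfl⟩, rfl⟩

theorem IsEarliestDeadlineFirst.surjOn_Icc_sub_one (hbusy : IsWorkConserving S r τ)
    (hedf : IsEarliestDeadlineFirst S r d τ) {D u t : ℤ}
    (h : Set.SurjOn τ (S.filter (d · ≤ D)) (Set.Icc u t)) {q : P} (hq : q ∈ S) (hqD : d q ≤ D)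
    (huq : u ≤ τ q) (hrq : r q < u) :
    Set.SurjOn τ (S.filter (d · ≤ D)) (Set.Icc (u - 1) t) := by
  rintro s ⟨hus, hst⟩
  rcases hus.lt_or_eq with hus | rfl
  · exact h ⟨by omega, hst⟩
  · obtain ⟨q', hq', hq's⟩ := hbusy q hq (u - 1) (by omega) (by omega)
    have hdq' : d q' ≤ d q := hedf q' hq' q hq (by omega) (by omega)
    exact ⟨q', mem_filter.2 ⟨hq', hdq'.trans hqD⟩, hq's⟩

end EDF

theorem edf_feasibility_general {P : Type*} (S : Finset P) (r d : P → ℤ)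
    (hfeas : ∃ σ : P → ℤ, Set.InjOn σ S ∧ ∀ p ∈ S, r p ≤ σ p ∧ σ p ≤ d p)
    (τ : P → ℤ)
    (hrel : ∀ p ∈ S, r p ≤ τ p)
    (hbusy : ∀ p ∈ S, ∀ s : ℤ, r p ≤ s → s < τ p → ∃ q ∈ S, τ q = s)
    (hedf : ∀ p ∈ S, ∀ q ∈ S, τ p < τ q → r q ≤ τ p → d p ≤ d q) :
    ∀ p ∈ S, τ p ≤ d p := by
  obtain ⟨σ, hσinj, hσ⟩ := hfeas
  intro p hp
  set B := S.filter (d · ≤ d p)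
  have hstart := IsEarliestDeadlineFirst.surjOn_Icc_release hbusy hedf hp
  obtain ⟨u, hu, hmin⟩ := Int.exists_least_of_bdd (P := fun u ↦ Set.SurjOn τ B (Set.Icc u (τ p)))
    ⟨_, fun _ ↦ sub_card_le_of_surjOn_Icc⟩ ⟨r p, hstart⟩
  have hu_le_release : ∀ q ∈ S, d q ≤ d p → u ≤ τ q → u ≤ r q := fun q hq hqD huq ↦
    not_lt.1 fun hrq ↦ (hmin _ (IsEarliestDeadlineFirst.surjOn_Icc_sub_one hbusy hedf hu hq hqD
      huq hrq)).not_gt (sub_one_lt u)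
  set A := B.filter (fun q ↦ u ≤ τ q ∧ τ q ≤ τ p)
  have hτA : Set.SurjOn τ A (Set.Icc u (τ p)) := fun s hs ↦ by
    obtain ⟨q, hqB, rfl⟩ := hu hs
    exact ⟨q, mem_filter.2 ⟨hqB, hs⟩, rfl⟩
  have hσA : Set.MapsTo σ A (Set.Icc u (d p)) := fun q hqA ↦ by
    obtain ⟨hqB, huq, -⟩ := mem_filter.1 hqA
    obtain ⟨hq, hqD⟩ := mem_filter.1 hqB
    exact ⟨(hu_le_release q hq hqD huq).trans (hσ q hq).1, (hσ q hq).2.trans hqD⟩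
  exact le_of_surjOn_Icc_of_mapsTo_Icc ((hmin _ hstart).trans (hrel p hp)) hτA hσA
    (hσinj.mono (coe_subset.2 ((filter_subset _ _).trans (filter_subset _ _))))

/-- EDF feasibility (Theorem 4): if a finite set `S` of packets admits an
injective schedule `σ` within the release-deadline windows, then any run `τ`
of the Earliest-Deadline-First policy — injective, never scheduling a packet
before its release, never idling while a released packet is still unsent, and
always preferring smaller deadlines among pending packets — also sends every
packet of `S` by its deadline. -/
theorem edf_feasibility {P : Type*} (S : Finset P) (r d : P → ℤ)
    (hrd : ∀ p ∈ S, r p ≤ d p)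
    (hfeas : ∃ σ : P → ℤ, Set.InjOn σ S ∧ ∀ p ∈ S, r p ≤ σ p ∧ σ p ≤ d p)
    (τ : P → ℤ) (hτinj : Set.InjOn τ S)
    (hrel : ∀ p ∈ S, r p ≤ τ p)
    (hbusy : ∀ p ∈ S, ∀ s : ℤ, r p ≤ s → s < τ p → ∃ q ∈ S, τ q = s)
    (hedf : ∀ p ∈ S, ∀ q ∈ S, τ p < τ q → r q ≤ τ p → d p ≤ d q) :
    ∀ p ∈ S, τ p ≤ d p :=
  edf_feasibility_general S r d hfeas τ hrel hbusy hedf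
end

section
/- Let w : P → ℝ≥0 on a finite packet set P, and consider the greedy OPS placement with buffer slots 0,…,b−1 at time t (each packet p placeable in slots ≤ min(t_p − t, b−1), processed in non-increasing value order, each placed in the highest-indexed feasible empty slot). Then in the resulting placement, for every placed packet p in slot i, every slot j with i ≤ j ≤ min(t_p − t, b−1) is occupied by a packet of value at least w_p. -/
/-- One step of the OPS greedy placement: place packet `p` into the
highest-indexed empty buffer slot `i < b` with `i ≤ min (c p) (b - 1)`,
discarding `p` if no such slot exists. -/
def opsPlace {P : Type*} (c : P → ℕ) (b : ℕ) (q : ℕ → Option P) (p : P) :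
    ℕ → Option P :=
  match ((List.range b).filter
      (fun i => decide (i ≤ min (c p) (b - 1)) && (q i).isNone)).max? with
  | some i => Function.update q i (some p)
  | none => q

/-- The OPS greedy placement obtained by processing the packets of `L` in order,
starting from an empty buffer. -/
def opsGreedy {P : Type*} (c : P → ℕ) (b : ℕ) (L : List P) : ℕ → Option P :=
  L.foldl (opsPlace c b) (fun _ => none)

/-!
Each packet is placed after all heavier ones, in the highest free slot of its window, so every
later slot of that window is already taken, by a heavier packet. Packets placed afterwards only fill
empty slots, hence the property, once established for a packet, is never destroyed.
-/

section OpsStructural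

variable {P α : Type*} [Preorder α] (w : P → α) (c : P → ℕ) (b : ℕ)

theorem opsPlace_eq_self_or_update (q : ℕ → Option P) (r : P) :
    opsPlace c b q r = q ∨
      ∃ m, q m = none ∧ (∀ j, m < j → j ≤ min (c r) (b - 1) → q j ≠ none) ∧
        opsPlace c b q r = Function.update q m (some r) := by
  unfold opsPlace
  cases hmax : ((List.range b).filter
      (fun i => decide (i ≤ min (c r) (b - 1)) && (q i).isNone)).max? with
  | none => exact .inl rfl
  | some m =>
    obtain ⟨hmem, hmax_le⟩ := List.max?_eq_some_iff.mp hmax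
    simp only [List.mem_filter, List.mem_range, Bool.and_eq_true, decide_eq_true_eq,
      Option.isNone_iff_eq_none] at hmem hmax_le
    refine .inr ⟨m, hmem.2.2, fun j hmj hjr hqj => ?_, rfl⟩
    have : j < b := by omega
    exact absurd (hmax_le j ⟨this, hjr, hqj⟩) (by omega)

theorem opsPlace_eq_some {q : ℕ → Option P} {r p : P} {i : ℕ}
    (h : opsPlace c b q r i = some p) : q i = some p ∨ p = r := by
  rcases opsPlace_eq_self_or_update c b q r with hq | ⟨m, -, -, hq⟩
  · exact .inl (hq ▸ h)
  · rw [hq] at h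
    by_cases him : i = m
    · subst him
      rw [Function.update_self, Option.some.injEq] at h
      exact .inr h.symm
    · rw [Function.update_of_ne him] at h
      exact .inl h

def OpsStructural (q : ℕ → Option P) : Prop :=
  ∀ p i, q i = some p → ∀ j, i ≤ j → j ≤ min (c p) (b - 1) →
    ∃ p', q j = some p' ∧ w p ≤ w p'

variable {w c b}

theorem OpsStructural.opsPlace {q : ℕ → Option P} (hq : OpsStructural w c b q) {r : P}
    (hr : ∀ i p, q i = some p → w r ≤ w p) :
    OpsStructural w c b (opsPlace c b q r) := by
  rcases opsPlace_eq_self_or_update c b q r with hplace | ⟨m, hm, hfull, hplace⟩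
  · rwa [hplace]
  rw [hplace]
  intro p i hpi j hij hj
  by_cases him : i = m
  · subst him
    rw [Function.update_self, Option.some.injEq] at hpi
    subst hpi
    rcases hij.eq_or_lt with rfl | hij
    · exact ⟨r, Function.update_self .., le_rfl⟩
    · obtain ⟨p', hp'⟩ := Option.ne_none_iff_exists'.mp (hfull j hij hj)
      exact ⟨p', by rwa [Function.update_of_ne hij.ne'], hr j p' hp'⟩
  · rw [Function.update_of_ne him] at hpi
    obtain ⟨p', hp', hwp'⟩ := hq p i hpi j hij hj
    have hjm : j ≠ m := by rintro rfl; simp [hm] at hp'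
    exact ⟨p', by rwa [Function.update_of_ne hjm], hwp'⟩

theorem OpsStructural.foldl_opsPlace {L : List P} (hL : L.Pairwise (fun p q => w q ≤ w p))
    {q : ℕ → Option P} (hq : OpsStructural w c b q)
    (hbound : ∀ s ∈ L, ∀ i p, q i = some p → w s ≤ w p) :
    OpsStructural w c b (L.foldl (_root_.opsPlace c b) q) := by
  induction L generalizing q with
  | nil => exact hq
  | cons r L ih =>
    rw [List.pairwise_cons] at hL
    refine ih hL.2 (hq.opsPlace (hbound r List.mem_cons_self)) fun s hs i p hpi => ?_
    rcases opsPlace_eq_some c b hpi with hpi | rfl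
    · exact hbound s (List.mem_cons_of_mem r hs) i p hpi
    · exact hL.1 s hs

end OpsStructural

theorem ops_structural_general {P : Type*} (w : P → ℝ) (c : P → ℕ) (b : ℕ)
    (L : List P)
    (hsorted : L.Pairwise (fun p q => w q < w p ∨ (w p = w q ∧ c q ≤ c p)))
    (p : P) (i : ℕ) (hp : opsGreedy c b L i = some p) :
    ∀ j, i ≤ j → j ≤ min (c p) (b - 1) →
      ∃ p', opsGreedy c b L j = some p' ∧ w p ≤ w p' := by
  have hL : L.Pairwise (fun p q => w q ≤ w p) :=
    hsorted.imp fun h => h.elim le_of_lt fun h => h.1.ge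
  have hempty : OpsStructural w c b (fun _ => none) := fun _ _ h => nomatch h
  exact OpsStructural.foldl_opsPlace hL hempty (fun _ _ _ _ h => nomatch h) p i hp

/-- Structural property of OPS: in the greedy placement built from a list
sorted in non-increasing value order (ties toward larger virtual deadline),
every slot `j` between the slot `i` of a placed packet `p` and the end of
`p`'s window `min (c p) (b - 1)` is occupied by a packet of value at least
`w p`. -/
theorem ops_structural {P : Type*} [DecidableEq P] (w : P → ℝ) (c : P → ℕ) (b : ℕ)
    (L : List P) (hnd : L.Nodup)
    (hsorted : L.Pairwise (fun p q => w q < w p ∨ (w p = w q ∧ c q ≤ c p)))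
    (p : P) (i : ℕ) (hp : opsGreedy c b L i = some p) :
    ∀ j, i ≤ j → j ≤ min (c p) (b - 1) →
      ∃ p', opsGreedy c b L j = some p' ∧ w p ≤ w p' :=
  ops_structural_general w c b L hsorted p i hp
end
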